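/- arXiv:1001.2962 — 2 statements merged into one kernel-verified Lean document; each statement's English description precedes it below -/
import Mathlib

section
/- For real σ > 1, log ζ(σ) - (1/2) log ζ(2σ) = (1/2) log(ζ(σ)²/ζ(2σ)) is positive and is strictly decreasing as a function of σ on (1,∞). -/
set_option autoImplicit false
open Complex

/-!
By the Euler product, `log ζ(σ) = ∑_p -log (1 - p^{-σ})` for `σ > 1`. Since
`-log (1 - x) + ½ log (1 - x²) = artanh x`, we get `log ζ(σ) - ½ log ζ(2σ) = ∑_p artanh (p^{-σ})`,
a convergent sum of positive terms, each strictly decreasing in `σ`.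
-/

open Real in
theorem Real.artanh_eq_neg_log_one_sub_sub_half_neg_log_one_sub_sq {x : ℝ}
    (hx : x ∈ Set.Ioo (-1) 1) :
    artanh x = -log (1 - x) - 1 / 2 * -log (1 - x ^ 2) := by
  obtain ⟨hx₀, hx₁⟩ := hx
  rw [artanh_eq_half_log ⟨hx₀.le, hx₁.le⟩, show 1 - x ^ 2 = (1 - x) * (1 + x) by ring,
    log_mul (by linarith) (by linarith), log_div (by linarith) (by linarith)]
  ring

namespace Nat.Primes

theorem rpow_neg_mem_Ioo (p : Nat.Primes) {σ : ℝ} (hσ : 0 < σ) :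
    ((p : ℕ) : ℝ) ^ (-σ) ∈ Set.Ioo 0 1 :=
  ⟨Real.rpow_pos_of_pos (by exact_mod_cast p.2.pos) _,
    Real.rpow_lt_one_of_one_lt_of_neg (by exact_mod_cast p.2.one_lt) (neg_lt_zero.mpr hσ)⟩

theorem strictAnti_rpow_neg (p : Nat.Primes) : StrictAnti fun σ : ℝ ↦ ((p : ℕ) : ℝ) ^ (-σ) :=
  fun _ _ h ↦ Real.rpow_lt_rpow_of_exponent_lt (by exact_mod_cast p.2.one_lt) (neg_lt_neg h)

theorem summable_rpow_neg {σ : ℝ} (hσ : 1 < σ) :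
    Summable fun p : Nat.Primes ↦ ((p : ℕ) : ℝ) ^ (-σ) :=
  (Real.summable_nat_rpow.mpr (by linarith)).subtype _

theorem summable_neg_log_one_sub_rpow_neg {σ : ℝ} (hσ : 1 < σ) :
    Summable fun p : Nat.Primes ↦ -Real.log (1 - ((p : ℕ) : ℝ) ^ (-σ)) := by
  simpa only [sub_eq_add_neg] using
    (Real.summable_log_one_add_of_summable (summable_rpow_neg hσ).neg).neg

theorem artanh_rpow_neg (p : Nat.Primes) {σ : ℝ} (hσ : 0 < σ) :
    Real.artanh (((p : ℕ) : ℝ) ^ (-σ)) =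
      -Real.log (1 - ((p : ℕ) : ℝ) ^ (-σ)) - 1 / 2 * -Real.log (1 - ((p : ℕ) : ℝ) ^ (-(2 * σ))) := by
  have hp := p.rpow_neg_mem_Ioo hσ
  rw [Real.artanh_eq_neg_log_one_sub_sub_half_neg_log_one_sub_sq ⟨by linarith [hp.1], hp.2⟩,
    ← Real.rpow_natCast, ← Real.rpow_mul (Nat.cast_nonneg _), Nat.cast_ofNat, neg_mul,
    mul_comm σ 2]

theorem summable_artanh_rpow_neg {σ : ℝ} (hσ : 1 < σ) :
    Summable fun p : Nat.Primes ↦ Real.artanh (((p : ℕ) : ℝ) ^ (-σ)) :=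
  ((summable_neg_log_one_sub_rpow_neg hσ).sub
    ((summable_neg_log_one_sub_rpow_neg (σ := 2 * σ) (by linarith)).mul_left (1 / 2))).congr
    fun p ↦ (p.artanh_rpow_neg (by linarith)).symm

theorem artanh_rpow_neg_lt (p : Nat.Primes) {σ₁ σ₂ : ℝ} (hσ₁ : 0 < σ₁) (h : σ₁ < σ₂) :
    Real.artanh (((p : ℕ) : ℝ) ^ (-σ₂)) < Real.artanh (((p : ℕ) : ℝ) ^ (-σ₁)) :=
  Real.artanh_lt_artanh (by linarith [(p.rpow_neg_mem_Ioo (hσ₁.trans h)).1])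
    (p.rpow_neg_mem_Ioo hσ₁).2 (p.strictAnti_rpow_neg h)

theorem tsum_artanh_rpow_neg_pos {σ : ℝ} (hσ : 1 < σ) :
    0 < ∑' p : Nat.Primes, Real.artanh (((p : ℕ) : ℝ) ^ (-σ)) :=
  (summable_artanh_rpow_neg hσ).tsum_pos
    (fun p ↦ Real.artanh_nonneg (p.rpow_neg_mem_Ioo (zero_lt_one.trans hσ)).1.le)
    ⟨2, Nat.prime_two⟩ (Real.artanh_pos (rpow_neg_mem_Ioo _ (zero_lt_one.trans hσ)))

theorem strictAntiOn_tsum_artanh_rpow_neg :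
    StrictAntiOn (fun σ : ℝ ↦ ∑' p : Nat.Primes, Real.artanh (((p : ℕ) : ℝ) ^ (-σ)))
      (Set.Ioi 1) := fun _ hσ₁ _ hσ₂ h ↦
  (summable_artanh_rpow_neg hσ₂).tsum_lt_tsum
    (fun p ↦ (p.artanh_rpow_neg_lt (zero_lt_one.trans hσ₁) h).le)
    (artanh_rpow_neg_lt ⟨2, Nat.prime_two⟩ (zero_lt_one.trans hσ₁) h)
    (summable_artanh_rpow_neg hσ₁)

end Nat.Primes

theorem riemannZeta_ofReal_eq_exp_tsum {σ : ℝ} (hσ : 1 < σ) :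
    riemannZeta σ = (Real.exp (∑' p : Nat.Primes, -Real.log (1 - ((p : ℕ) : ℝ) ^ (-σ))) : ℝ) := by
  rw [← riemannZeta_eulerProduct_exp_log (by simpa using hσ), ofReal_exp, ofReal_tsum]
  congr 1
  refine tsum_congr fun p ↦ ?_
  have hp := p.rpow_neg_mem_Ioo (zero_lt_one.trans hσ)
  rw [ofReal_neg, ofReal_log (by linarith [hp.2]), ofReal_sub, ofReal_one,
    ofReal_cpow (by positivity), ofReal_neg, ofReal_natCast]

theorem riemannZeta_ofReal_re_pos {σ : ℝ} (hσ : 1 < σ) : 0 < (riemannZeta σ).re := by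
  rw [riemannZeta_ofReal_eq_exp_tsum hσ, ofReal_re]
  exact Real.exp_pos _

theorem log_riemannZeta_ofReal_re {σ : ℝ} (hσ : 1 < σ) :
    Real.log (riemannZeta σ).re = ∑' p : Nat.Primes, -Real.log (1 - ((p : ℕ) : ℝ) ^ (-σ)) := by
  rw [riemannZeta_ofReal_eq_exp_tsum hσ, ofReal_re, Real.log_exp]

theorem log_riemannZeta_re_sub_half_log_riemannZeta_two_mul_re {σ : ℝ} (hσ : 1 < σ) :
    Real.log (riemannZeta σ).re - 1 / 2 * Real.log (riemannZeta (2 * σ)).re =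
      ∑' p : Nat.Primes, Real.artanh (((p : ℕ) : ℝ) ^ (-σ)) := by
  have h2σ : 1 < 2 * σ := by linarith
  rw [show (2 * σ : ℂ) = ((2 * σ : ℝ) : ℂ) by push_cast; rfl, log_riemannZeta_ofReal_re hσ,
    log_riemannZeta_ofReal_re h2σ, ← tsum_mul_left,
    ← (Nat.Primes.summable_neg_log_one_sub_rpow_neg hσ).tsum_sub
      ((Nat.Primes.summable_neg_log_one_sub_rpow_neg h2σ).mul_left _)]
  exact tsum_congr fun p ↦ (p.artanh_rpow_neg (by linarith)).symm

theorem stmt4 :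
    (∀ σ : ℝ, 1 < σ →
      Real.log ((riemannZeta σ).re) - (1 / 2) * Real.log ((riemannZeta (2 * σ)).re) =
        (1 / 2) * Real.log ((riemannZeta σ).re ^ 2 / (riemannZeta (2 * σ)).re) ∧
      0 < Real.log ((riemannZeta σ).re) - (1 / 2) * Real.log ((riemannZeta (2 * σ)).re)) ∧
    StrictAntiOn
      (fun σ : ℝ => Real.log ((riemannZeta σ).re) - (1 / 2) * Real.log ((riemannZeta (2 * σ)).re))
      (Set.Ioi 1) := by
  refine ⟨fun σ hσ ↦ ⟨?_, ?_⟩, ?_⟩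
  · have hζ₂ := riemannZeta_ofReal_re_pos (σ := 2 * σ) (by linarith)
    push_cast at hζ₂
    rw [Real.log_div (pow_pos (riemannZeta_ofReal_re_pos hσ) 2).ne' hζ₂.ne', Real.log_pow]
    push_cast
    ring
  · rw [log_riemannZeta_re_sub_half_log_riemannZeta_two_mul_re hσ]
    exact Nat.Primes.tsum_artanh_rpow_neg_pos hσ
  · refine Nat.Primes.strictAntiOn_tsum_artanh_rpow_neg.congr fun σ hσ ↦ ?_
    exact (log_riemannZeta_re_sub_half_log_riemannZeta_two_mul_re hσ).symm
end

section
/- For σ > 1 real and any real t, the value -∑_{p prime} Log(1 - p^{-(σ+it)}) lies in the closed disk centered at (1/2) log ζ(2σ) of radius (1/2) log(ζ(σ)²/ζ(2σ)). -/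
set_option autoImplicit false

open Complex

/-!
Taking logarithms of the Euler products, `ζ(σ) = exp ∑ₚ -log (1 - p^{-σ})` and
`ζ(2σ) = exp ∑ₚ -log (1 - p^{-2σ})`, so the claim follows termwise from a disk estimate:
if `‖u - 1‖ ≤ tanh r` then `log u` lies in the closed disk of centre `-log (cosh r)` and
radius `r`. Writing `log u + log (cosh r) = a + b i`, the hypothesis becomes
`cosh a ≤ cosh r * cos b`, which forces `a² + b² ≤ r²` because
`cosh √(a² + b²) ≤ cosh a * cosh b` (convexity of `cosh ∘ √`) and `cos b * cosh b ≤ 1` for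
`|b| ≤ π / 2`. For `u = 1 - p^{-s}` take `r = artanh (p^{-σ})`.
-/

open Set

lemma dist_tsum_tsum_le_tsum {ι E : Type*} [NormedAddCommGroup E] {f g : ι → E} {r : ι → ℝ}
    (hf : Summable f) (hg : Summable g) (hr : Summable r) (h : ∀ i, dist (f i) (g i) ≤ r i) :
    dist (∑' i, f i) (∑' i, g i) ≤ ∑' i, r i := by
  rw [dist_eq_norm, ← hf.tsum_sub hg]
  exact tsum_of_norm_bounded hr.hasSum fun i ↦ (dist_eq_norm (f i) (g i)) ▸ h i

namespace Real

lemma summable_log_one_sub {ι : Type*} {x : ι → ℝ} (hx : Summable x) :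
    Summable fun i ↦ log (1 - x i) := by
  simpa only [sub_eq_add_neg] using summable_log_one_add_of_summable hx.neg

lemma sinh_le_mul_cosh {x : ℝ} (hx : 0 ≤ x) : sinh x ≤ x * cosh x := by
  have hderiv (y : ℝ) : HasDerivAt (fun y ↦ y * cosh y - sinh y) (y * sinh y) y :=
    (((hasDerivAt_id' y).mul (hasDerivAt_cosh y)).sub (hasDerivAt_sinh y)).congr_deriv (by ring)
  have hmono : Monotone (fun y ↦ y * cosh y - sinh y) := by
    refine monotone_of_deriv_nonneg (fun y ↦ (hderiv y).differentiableAt) fun y ↦ ?_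
    rw [(hderiv y).deriv]
    rcases le_total 0 y with hy | hy
    · exact mul_nonneg hy (sinh_nonneg_iff.mpr hy)
    · exact mul_nonneg_of_nonpos_of_nonpos hy (sinh_nonpos_iff.mpr hy)
  simpa using hmono hx

lemma cos_mul_cosh_le_one {x : ℝ} (hx : |x| ≤ π / 2) : cos x * cosh x ≤ 1 := by
  have hderiv (y : ℝ) :
      HasDerivAt (fun y ↦ cos y * cosh y) (cos y * sinh y - sin y * cosh y) y :=
    ((hasDerivAt_cos y).mul (hasDerivAt_cosh y)).congr_deriv (by ring)
  have hanti : AntitoneOn (fun y ↦ cos y * cosh y) (Icc 0 (π / 2)) := by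
    refine antitoneOn_of_deriv_nonpos (convex_Icc _ _) (by fun_prop)
      (fun y _ ↦ (hderiv y).differentiableAt.differentiableWithinAt) fun y hy ↦ ?_
    rw [interior_Icc] at hy
    rw [(hderiv y).deriv]
    -- the derivative is nonpositive because `tanh y ≤ y ≤ tan y`
    have hcos : 0 < cos y := cos_pos_of_mem_Ioo ⟨by linarith [pi_pos, hy.1], hy.2⟩
    have htan : y * cos y ≤ sin y := by
      have := le_tan hy.1.le hy.2
      rwa [tan_eq_sin_div_cos, le_div_iff₀ hcos] at this
    nlinarith [sinh_le_mul_cosh hy.1.le, cosh_pos y]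
  have := hanti ⟨le_rfl, by positivity⟩ ⟨abs_nonneg x, hx⟩ (abs_nonneg x)
  simpa using this

lemma monotoneOn_sinh_div_self : MonotoneOn (fun x ↦ sinh x / x) (Ioi 0) := by
  have hderiv {y : ℝ} (hy : y ≠ 0) :
      HasDerivAt (fun x ↦ sinh x / x) ((y * cosh y - sinh y) / y ^ 2) y :=
    ((hasDerivAt_sinh y).div (hasDerivAt_id' y) hy).congr_deriv (by ring)
  refine monotoneOn_of_deriv_nonneg (convex_Ioi 0) ?_ ?_ fun y hy ↦ ?_
  · exact fun y hy ↦ (hderiv (ne_of_gt hy)).continuousAt.continuousWithinAt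
  · rw [interior_Ioi]
    exact fun y hy ↦ (hderiv (ne_of_gt hy)).differentiableAt.differentiableWithinAt
  · rw [interior_Ioi] at hy
    rw [(hderiv (ne_of_gt hy)).deriv]
    exact div_nonneg (sub_nonneg.mpr (sinh_le_mul_cosh (le_of_lt hy))) (sq_nonneg y)

lemma convexOn_cosh_sqrt : ConvexOn ℝ (Ici 0) (fun x ↦ cosh √x) := by
  have hderiv {y : ℝ} (hy : 0 < y) : HasDerivAt (fun x ↦ cosh √x) (sinh √y / √y / 2) y :=
    ((hasDerivAt_cosh √y).comp y (hasDerivAt_sqrt hy.ne')).congr_deriv (by ring)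
  refine MonotoneOn.convexOn_of_deriv (convex_Ici 0) (by fun_prop) ?_ ?_
  · rw [interior_Ici]
    exact fun y hy ↦ (hderiv hy).differentiableAt.differentiableWithinAt
  · rw [interior_Ici]
    intro u hu v hv huv
    rw [(hderiv hu).deriv, (hderiv hv).deriv]
    gcongr ?_ / 2
    exact monotoneOn_sinh_div_self (sqrt_pos.mpr hu) (sqrt_pos.mpr hv) (sqrt_le_sqrt huv)

lemma cosh_sqrt_sq_add_sq_le (a b : ℝ) : cosh √(a ^ 2 + b ^ 2) ≤ cosh a * cosh b := by
  have h := convexOn_cosh_sqrt.2 (sq_nonneg (a + b)) (sq_nonneg (a - b))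
    (by norm_num : (0 : ℝ) ≤ 1 / 2) (by norm_num : (0 : ℝ) ≤ 1 / 2) (by norm_num)
  simp only [smul_eq_mul, sqrt_sq_eq_abs, cosh_abs, cosh_add, cosh_sub] at h
  calc cosh √(a ^ 2 + b ^ 2) = cosh √(1 / 2 * (a + b) ^ 2 + 1 / 2 * (a - b) ^ 2) := by
        ring_nf
    _ ≤ _ := h
    _ = cosh a * cosh b := by ring

lemma sqrt_sq_add_sq_le_of_cosh_le_cosh_mul_cos {a b r : ℝ} (hr : 0 ≤ r) (hb : |b| ≤ π / 2)
    (h : cosh a ≤ cosh r * cos b) : √(a ^ 2 + b ^ 2) ≤ r := by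
  have : cosh √(a ^ 2 + b ^ 2) ≤ cosh r :=
    calc cosh √(a ^ 2 + b ^ 2) ≤ cosh a * cosh b := cosh_sqrt_sq_add_sq_le a b
      _ ≤ cosh r * (cos b * cosh b) := by nlinarith [cosh_pos b]
      _ ≤ cosh r := mul_le_of_le_one_right (cosh_pos r).le (cos_mul_cosh_le_one hb)
  rwa [cosh_le_cosh, abs_of_nonneg (sqrt_nonneg _), abs_of_nonneg hr] at this

end Real

namespace Complex

lemma norm_log_add_log_cosh_le {u : ℂ} {r : ℝ} (hu : ‖u - 1‖ ≤ Real.tanh r) :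
    ‖log u + Real.log (Real.cosh r)‖ ≤ r := by
  have hC : 0 < Real.cosh r := Real.cosh_pos r
  have htanh : Real.tanh r * Real.cosh r = Real.sinh r := by
    rw [Real.tanh_eq_sinh_div_cosh, div_mul_cancel₀ _ hC.ne']
  have hr : 0 ≤ r := by
    by_contra! hr
    nlinarith [Real.sinh_neg_iff.mpr hr, norm_nonneg (u - 1)]
  have hre : 0 < u.re := by
    have h1 : Real.tanh r < 1 := by nlinarith [Real.sinh_lt_cosh r]
    have h2 := re_le_norm (1 - u)
    rw [← norm_neg, neg_sub] at h2
    simp only [sub_re, one_re] at h2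
    linarith
  have hu0 : u ≠ 0 := fun h ↦ by simp [h] at hre
  have hρ : 0 < ‖u‖ := norm_pos_iff.mpr hu0
  set a := Real.log ‖u‖ + Real.log (Real.cosh r)
  have hlog : log u + Real.log (Real.cosh r) = a + arg u * I := by
    apply Complex.ext <;> simp [log_re, log_im, a]
  rw [hlog, norm_add_mul_I]
  refine Real.sqrt_sq_add_sq_le_of_cosh_le_cosh_mul_cos hr
    (abs_arg_lt_pi_div_two_iff.mpr (Or.inl hre)).le ?_
  have hnorm : ‖u - 1‖ ^ 2 = ‖u‖ ^ 2 - 2 * u.re + 1 := by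
    simp only [Complex.sq_norm, normSq_apply, sub_re, sub_im, one_re, one_im]
    ring
  -- `‖u - 1‖ ≤ tanh r`, multiplied by `cosh r` and squared
  have key : ‖u‖ ^ 2 * Real.cosh r ^ 2 + 1 ≤ Real.cosh r ^ 2 * 2 * u.re := by
    have h1 : (‖u - 1‖ * Real.cosh r) ^ 2 ≤ Real.sinh r ^ 2 := by
      rw [← htanh]; gcongr
    nlinarith [Real.cosh_sq r]
  rw [Real.cosh_eq, Real.exp_neg, Real.exp_add, Real.exp_log hρ, Real.exp_log hC, cos_arg hu0]
  field_simp
  exact key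

lemma norm_log_sub_half_log_one_sub_sq_le {u : ℂ} {x : ℝ} (hx : x < 1) (hu : ‖u - 1‖ ≤ x) :
    ‖log u - (1 / 2 * Real.log (1 - x ^ 2) : ℝ)‖ ≤
      1 / 2 * Real.log (1 - x ^ 2) - Real.log (1 - x) := by
  have hx0 : 0 ≤ x := (norm_nonneg _).trans hu
  have hx' : x ∈ Ioo (-1) 1 := ⟨by linarith, hx⟩
  have hcosh : Real.log (Real.cosh (Real.artanh x)) = -(1 / 2 * Real.log (1 - x ^ 2)) := by
    rw [Real.cosh_artanh hx', one_div, Real.log_inv, Real.log_sqrt (by nlinarith)]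
    ring
  have hartanh : Real.artanh x = 1 / 2 * Real.log (1 - x ^ 2) - Real.log (1 - x) := by
    rw [Real.artanh_eq_half_log (Ioo_subset_Icc_self hx'),
      Real.log_div (by linarith) (by linarith), show 1 - x ^ 2 = (1 + x) * (1 - x) by ring,
      Real.log_mul (by linarith) (by linarith)]
    ring
  have := norm_log_add_log_cosh_le (r := Real.artanh x) (by rwa [Real.tanh_artanh hx'])
  rwa [hcosh, hartanh, ofReal_neg, ← sub_eq_add_neg] at this

lemma summable_log_one_sub {ι : Type*} {z : ι → ℂ} (hz : Summable z) :
    Summable fun i ↦ log (1 - z i) := by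
  simpa only [sub_eq_add_neg] using summable_log_one_add_of_summable hz.neg

lemma dist_tsum_neg_log_one_sub_le {ι : Type*} {z : ι → ℂ} (hz : Summable fun i ↦ ‖z i‖)
    (hz1 : ∀ i, ‖z i‖ < 1) :
    dist (∑' i, -log (1 - z i)) ((1 / 2 * ∑' i, -Real.log (1 - ‖z i‖ ^ 2) : ℝ) : ℂ) ≤
      ∑' i, -Real.log (1 - ‖z i‖) - 1 / 2 * ∑' i, -Real.log (1 - ‖z i‖ ^ 2) := by
  have hsq : Summable fun i ↦ ‖z i‖ ^ 2 :=
    hz.of_nonneg_of_le (fun i ↦ sq_nonneg _)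
      fun i ↦ pow_le_of_le_one (norm_nonneg _) (hz1 i).le two_ne_zero
  have hA := (Real.summable_log_one_sub hz).neg
  have hB := ((Real.summable_log_one_sub hsq).neg).mul_left (1 / 2)
  rw [← tsum_mul_left, ← hA.tsum_sub hB, ofReal_tsum]
  refine dist_tsum_tsum_le_tsum (summable_log_one_sub hz.of_norm).neg (summable_ofReal.mpr hB)
    (hA.sub hB) fun i ↦ ?_
  rw [dist_eq_norm, ← norm_neg]
  convert norm_log_sub_half_log_one_sub_sq_le (u := 1 - z i) (hz1 i) (by simp) using 1
  · congr 1; push_cast; ring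
  · ring

end Complex

lemma riemannZeta_re_eq_exp_tsum {σ : ℝ} (hσ : 1 < σ) :
    (riemannZeta σ).re =
      Real.exp (∑' p : Nat.Primes, -Real.log (1 - ((p : ℕ) : ℝ) ^ (-σ))) := by
  have hterm (p : Nat.Primes) :
      -log (1 - ((p : ℕ) : ℂ) ^ (-(σ : ℂ))) =
        (-Real.log (1 - ((p : ℕ) : ℝ) ^ (-σ)) : ℝ) := by
    have hle : ((p : ℕ) : ℝ) ^ (-σ) ≤ 1 :=
      Real.rpow_le_one_of_one_le_of_nonpos (by exact_mod_cast p.prop.one_lt.le) (by linarith)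
    rw [ofReal_neg, ofReal_log (sub_nonneg.mpr hle), ofReal_sub, ofReal_one,
      ofReal_cpow (Nat.cast_nonneg _), ofReal_neg, ofReal_natCast]
  rw [← riemannZeta_eulerProduct_exp_log (by simpa using hσ)]
  simp_rw [hterm, ← ofReal_tsum, ← ofReal_exp, ofReal_re]

theorem stmt6 (σ t : ℝ) (hσ : 1 < σ) :
    dist (-∑' p : Nat.Primes, Complex.log (1 - ((p : ℕ) : ℂ) ^ (-(σ + t * I))))
        (((1 / 2) * Real.log ((riemannZeta (2 * σ)).re) : ℝ) : ℂ) ≤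
      (1 / 2) * Real.log ((riemannZeta σ).re ^ 2 / (riemannZeta (2 * σ)).re) := by
  have hnorm (p : Nat.Primes) : ‖((p : ℕ) : ℂ) ^ (-(σ + t * I))‖ = ((p : ℕ) : ℝ) ^ (-σ) := by
    simp [norm_natCast_cpow_of_pos p.prop.pos]
  have hsq (p : Nat.Primes) : (((p : ℕ) : ℝ) ^ (-σ)) ^ 2 = ((p : ℕ) : ℝ) ^ (-(2 * σ)) := by
    rw [← Real.rpow_natCast, ← Real.rpow_mul (Nat.cast_nonneg _)]
    ring_nf
  have hbound := dist_tsum_neg_log_one_sub_le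
    (z := fun p : Nat.Primes ↦ ((p : ℕ) : ℂ) ^ (-(σ + t * I)))
    (by simpa only [hnorm] using Nat.Primes.summable_rpow.mpr (by linarith))
    fun p ↦ hnorm p ▸ Real.rpow_lt_one_of_one_lt_of_neg (by exact_mod_cast p.prop.one_lt)
      (by linarith)
  simp only [hnorm, hsq] at hbound
  rw [tsum_neg] at hbound
  rw [show (2 : ℂ) * σ = ((2 * σ : ℝ) : ℂ) by push_cast; rfl, riemannZeta_re_eq_exp_tsum hσ,
    riemannZeta_re_eq_exp_tsum (by linarith), Real.log_div (by positivity) (by positivity),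
    Real.log_pow, Real.log_exp, Real.log_exp]
  convert hbound using 1
  push_cast
  ring
end
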